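/- arXiv:2102.09014 — 2 statements merged into one kernel-verified Lean document; each statement's English description precedes it below -/
import Mathlib

section
/- Suppose (ū, p̄) is a global minimizer of the relaxed problem min p^T F(u) over Ξ̄ = {(u,p) : G(u)p ≤ 0, p ∈ Ω̄}. Let i be any index with p̄_i > 0 and set p̂ = e_i. Then (ū, p̂) is a global minimizer of the mixed-integer problem min p^T F(u) over Ξ = {(u,p) : G(u)p ≤ 0, p ∈ Ω}, and p̄^T F(ū) = p̂^T F(ū) = F(ū)_i. (Proposition 2 of the paper.) -/
/-- Proposition 2: if `(ū, p̄)` is a global minimizer of the relaxed problem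
`min pᵀF(u)` over `Ξ̄ = {(u,p) : G(u)p ≤ 0, p ∈ Ω̄}`, and `i` is an index with `p̄ i > 0`,
then `(ū, e_i)` is a global minimizer of the mixed-integer problem over
`Ξ = {(u,p) : G(u)p ≤ 0, p ∈ Ω}`, and `p̄ᵀF(ū) = e_iᵀF(ū) = F(ū)_i`. -/
theorem stmt_6 (nu nv m : ℕ) (hnv : 1 ≤ nv)
    (f : (Fin nu → ℝ) → Fin nv → ℝ) (g : (Fin nu → ℝ) → Fin nv → Fin m → ℝ)
    (ubar : Fin nu → ℝ) (pbar : Fin nv → ℝ)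
    (hfeas : ((∀ v, 0 ≤ pbar v ∧ pbar v ≤ 1) ∧ ∑ v, pbar v = 1) ∧
      (∀ v j, pbar v * g ubar v j ≤ 0))
    (hmin : ∀ (u : Fin nu → ℝ) (p : Fin nv → ℝ),
      (((∀ v, 0 ≤ p v ∧ p v ≤ 1) ∧ ∑ v, p v = 1) ∧ (∀ v j, p v * g u v j ≤ 0)) →
      ∑ v, pbar v * f ubar v ≤ ∑ v, p v * f u v)
    (i : Fin nv) (hi : 0 < pbar i) :
    -- (ū, e_i) is feasible for the mixed-integer problem
    (((∀ v, (Pi.single i 1 : Fin nv → ℝ) v = 0 ∨ (Pi.single i 1 : Fin nv → ℝ) v = 1) ∧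
        ∑ v, (Pi.single i 1 : Fin nv → ℝ) v = 1) ∧
      (∀ v j, (Pi.single i 1 : Fin nv → ℝ) v * g ubar v j ≤ 0)) ∧
    -- and globally optimal for it
    (∀ (u : Fin nu → ℝ) (p : Fin nv → ℝ),
      (((∀ v, p v = 0 ∨ p v = 1) ∧ ∑ v, p v = 1) ∧ (∀ v j, p v * g u v j ≤ 0)) →
      ∑ v, (Pi.single i 1 : Fin nv → ℝ) v * f ubar v ≤ ∑ v, p v * f u v) ∧
    -- with no optimality gap
    (∑ v, pbar v * f ubar v = ∑ v, (Pi.single i 1 : Fin nv → ℝ) v * f ubar v) ∧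
    (∑ v, (Pi.single i 1 : Fin nv → ℝ) v * f ubar v = f ubar i) := by
  set S : ℝ := ∑ v, pbar v * f ubar v with hS
  -- sum of a single
  have hsingle : ∀ (h : Fin nv → ℝ) (k : Fin nv),
      ∑ v, (Pi.single k 1 : Fin nv → ℝ) v * h v = h k := by
    intro h k
    simp [Pi.single_apply, ite_mul]
  -- e_k is relaxed-feasible whenever pbar k > 0
  have hfeask : ∀ k : Fin nv, 0 < pbar k →
      ((∀ v, 0 ≤ (Pi.single k 1 : Fin nv → ℝ) v ∧ (Pi.single k 1 : Fin nv → ℝ) v ≤ 1) ∧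
        ∑ v, (Pi.single k 1 : Fin nv → ℝ) v = 1) ∧
      (∀ v j, (Pi.single k 1 : Fin nv → ℝ) v * g ubar v j ≤ 0) := by
    intro k hk
    have hgk : ∀ j, g ubar k j ≤ 0 := by
      intro j
      have := hfeas.2 k j
      nlinarith
    refine ⟨⟨fun v => ?_, by simp⟩, fun v j => ?_⟩
    · by_cases h : v = k <;> simp [Pi.single_apply, h]
    · by_cases h : v = k <;> simp [Pi.single_apply, h, hgk j]
  have hSle : ∀ k : Fin nv, 0 < pbar k → S ≤ f ubar k := by
    intro k hk
    have := hmin ubar (Pi.single k 1) (hfeask k hk)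
    rwa [hsingle] at this
  -- S = f ubar i
  have hfiS : f ubar i = S := by
    have h1 : S ≤ f ubar i := hSle i hi
    -- termwise lower bound on the sum over erase i
    have h2 : ∀ v ∈ Finset.univ.erase i, pbar v * S ≤ pbar v * f ubar v := by
      intro v _
      rcases (hfeas.1.1 v).1.eq_or_lt with h | h
      · simp [← h]
      · exact mul_le_mul_of_nonneg_left (hSle v h) (le_of_lt h)
    have hsplit : S = pbar i * f ubar i + ∑ v ∈ Finset.univ.erase i, pbar v * f ubar v := by
      rw [hS, ← Finset.add_sum_erase _ _ (Finset.mem_univ i)]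
    have hpsum : ∑ v ∈ Finset.univ.erase i, pbar v = 1 - pbar i := by
      have := hfeas.1.2
      rw [← Finset.add_sum_erase _ _ (Finset.mem_univ i)] at this
      linarith
    have h3 : ∑ v ∈ Finset.univ.erase i, pbar v * S ≤
        ∑ v ∈ Finset.univ.erase i, pbar v * f ubar v := Finset.sum_le_sum h2
    rw [← Finset.sum_mul, hpsum] at h3
    nlinarith
  refine ⟨⟨⟨fun v => ?_, by simp⟩, (hfeask i hi).2⟩, fun u p hp => ?_, ?_, hsingle _ i⟩
  · by_cases h : v = i <;> simp [Pi.single_apply, h]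
  · rw [hsingle, hfiS]
    exact hmin u p ⟨⟨fun v => by rcases hp.1.1 v with h | h <;> simp [h], hp.1.2⟩, hp.2⟩
  · rw [hsingle, hfiS]
end

section
/- If (ū, p̄) is a global minimizer of the relaxed problem, then the value of the relaxed problem equals the value of the original mixed-integer problem: min over Ξ̄ of p^T F(u) = min over Ξ of p^T F(u). I.e., there is no optimality gap between the MINLP and its simplex relaxation at global minimizers. -/
/-- No optimality gap at global minimizers: if `(ū, p̄)` is a global minimizer of the relaxed
problem over `Ξ̄`, then the mixed-integer problem over `Ξ` has a global minimizer with the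
same objective value. -/
theorem stmt_7 (nu nv m : ℕ) (hnv : 1 ≤ nv)
    (f : (Fin nu → ℝ) → Fin nv → ℝ) (g : (Fin nu → ℝ) → Fin nv → Fin m → ℝ)
    (ubar : Fin nu → ℝ) (pbar : Fin nv → ℝ)
    (hfeas : ((∀ v, 0 ≤ pbar v ∧ pbar v ≤ 1) ∧ ∑ v, pbar v = 1) ∧
      (∀ v j, pbar v * g ubar v j ≤ 0))
    (hmin : ∀ (u : Fin nu → ℝ) (p : Fin nv → ℝ),
      (((∀ v, 0 ≤ p v ∧ p v ≤ 1) ∧ ∑ v, p v = 1) ∧ (∀ v j, p v * g u v j ≤ 0)) →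
      ∑ v, pbar v * f ubar v ≤ ∑ v, p v * f u v) :
    ∃ (ustar : Fin nu → ℝ) (pstar : Fin nv → ℝ),
      (((∀ v, pstar v = 0 ∨ pstar v = 1) ∧ ∑ v, pstar v = 1) ∧
        (∀ v j, pstar v * g ustar v j ≤ 0)) ∧
      (∀ (u : Fin nu → ℝ) (p : Fin nv → ℝ),
        (((∀ v, p v = 0 ∨ p v = 1) ∧ ∑ v, p v = 1) ∧ (∀ v j, p v * g u v j ≤ 0)) →
        ∑ v, pstar v * f ustar v ≤ ∑ v, p v * f u v) ∧
      ∑ v, pstar v * f ustar v = ∑ v, pbar v * f ubar v := by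
  obtain ⟨⟨hbox, hsum⟩, hg⟩ := hfeas
  -- support is nonempty
  have hne : (Finset.univ.filter (fun v => 0 < pbar v)).Nonempty := by
    by_contra h
    have h0 : ∀ v, pbar v = 0 := by
      intro v
      rcases lt_or_eq_of_le (hbox v).1 with hv | hv
      · exact absurd ⟨v, Finset.mem_filter.mpr ⟨Finset.mem_univ v, hv⟩⟩ h
      · exact hv.symm
    simp [h0] at hsum
  obtain ⟨v0, hv0mem, hv0min⟩ := (Finset.univ.filter (fun v => 0 < pbar v)).exists_min_image
    (fun v => f ubar v) hne
  have hv0pos : 0 < pbar v0 := (Finset.mem_filter.mp hv0mem).2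
  set pstar : Fin nv → ℝ := fun v => if v = v0 then 1 else 0 with hps
  have hpsum : ∑ v, pstar v = 1 := by simp [hps]
  have hpg : ∀ v j, pstar v * g ubar v j ≤ 0 := by
    intro v j
    by_cases hv : v = v0
    · subst hv
      have := hg v j
      have hgle : g ubar v j ≤ 0 := nonpos_of_mul_nonpos_right this hv0pos
      simpa [hps] using hgle
    · simp [hps, hv]
  have hobj : ∑ v, pstar v * f ubar v = f ubar v0 := by simp [hps]
  -- f ubar v0 ≤ relaxed value
  have key : f ubar v0 ≤ ∑ v, pbar v * f ubar v := by
    calc f ubar v0 = ∑ v, pbar v * f ubar v0 := by rw [← Finset.sum_mul, hsum, one_mul]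
    _ ≤ ∑ v, pbar v * f ubar v := by
        apply Finset.sum_le_sum
        intro v _
        rcases lt_or_eq_of_le (hbox v).1 with hv | hv
        · exact mul_le_mul_of_nonneg_left
            (hv0min v (Finset.mem_filter.mpr ⟨Finset.mem_univ v, hv⟩)) hv.le
        · simp [← hv]
  have key2 : ∑ v, pbar v * f ubar v ≤ f ubar v0 := by
    have := hmin ubar pstar ⟨⟨fun v => by by_cases hv : v = v0 <;> simp [hps, hv], hpsum⟩, hpg⟩
    rwa [hobj] at this
  have heq : ∑ v, pstar v * f ubar v = ∑ v, pbar v * f ubar v := by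
    rw [hobj]; exact le_antisymm key key2
  refine ⟨ubar, pstar, ⟨⟨fun v => by by_cases hv : v = v0 <;> simp [hps, hv], hpsum⟩, hpg⟩,
    ?_, heq⟩
  intro u p ⟨⟨hp01, hpsum'⟩, hpg'⟩
  have hrel : ((∀ v, 0 ≤ p v ∧ p v ≤ 1) ∧ ∑ v, p v = 1) ∧ (∀ v j, p v * g u v j ≤ 0) :=
    ⟨⟨fun v => by rcases hp01 v with h | h <;> simp [h], hpsum'⟩, hpg'⟩
  calc ∑ v, pstar v * f ubar v = ∑ v, pbar v * f ubar v := heq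
  _ ≤ ∑ v, p v * f u v := hmin u p hrel
end
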